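/- The maps b(x₁,x₂,x₃) = (-x₁+1/2, -x₂, x₃+1/2) and c(x₁,x₂,x₃) = (-x₁, x₂+1/2, -x₃) on the torus T³ = (ℝ/ℤ)³ generate a group acting freely on T³: no nontrivial element of the group generated by b and c has a fixed point. -/

import Mathlib

/-!
`b` and `c` are commuting involutions, so the group they generate is `{1, b, c, bc}`.
Each of `b`, `c`, `bc` translates one coordinate (`x₃`, `x₂`, `x₁` respectively) by `1/2`,
and a translation by `1/2` of the circle `ℝ/ℤ` has no fixed point.
-/

/-- One circle factor of the torus `T³ = (ℝ/ℤ)³`. -/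
abbrev Circ : Type := AddCircle (1 : ℝ)

/-- The torus `T³`. -/
abbrev T3 : Type := Circ × Circ × Circ

/-- The map `b(x₁,x₂,x₃) = (-x₁+1/2, -x₂, x₃+1/2)` on `T³`. -/
noncomputable def bFun : T3 → T3 :=
  fun x => (-x.1 + ((1/2 : ℝ) : Circ), -x.2.1, x.2.2 + ((1/2 : ℝ) : Circ))

/-- The map `c(x₁,x₂,x₃) = (-x₁, x₂+1/2, -x₃)` on `T³`. -/
noncomputable def cFun : T3 → T3 :=
  fun x => (-x.1, x.2.1 + ((1/2 : ℝ) : Circ), -x.2.2)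

lemma half_add_half : ((1/2 : ℝ) : Circ) + ((1/2 : ℝ) : Circ) = 0 := by
  rw [← AddCircle.coe_add]; norm_num

lemma bFun_invol : Function.Involutive bFun := by
  rintro ⟨x1, x2, x3⟩
  simp only [bFun, Prod.mk.injEq]
  exact ⟨by abel, by abel, by rw [add_assoc, half_add_half, add_zero]⟩

lemma cFun_invol : Function.Involutive cFun := by
  rintro ⟨x1, x2, x3⟩
  simp only [cFun, Prod.mk.injEq]
  exact ⟨by abel, by rw [add_assoc, half_add_half, add_zero], by abel⟩

/-- `b` as a bijection of `T³`. -/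
noncomputable def bPerm : Equiv.Perm T3 := bFun_invol.toPerm

/-- `c` as a bijection of `T³`. -/
noncomputable def cPerm : Equiv.Perm T3 := cFun_invol.toPerm

theorem Commute.closure_pair_subset {G : Type*} [Group G] {a b : G} (hab : Commute a b)
    (ha : a * a = 1) (hb : b * b = 1) :
    (Subgroup.closure {a, b} : Set G) ⊆ {1, a, b, a * b} := by
  have mul_mem : ∀ x ∈ ({a, b} : Set G), ∀ y ∈ ({1, a, b, a * b} : Set G),
      x * y ∈ ({1, a, b, a * b} : Set G) := by
    have haab : a * (a * b) = b := by rw [← mul_assoc, ha, one_mul]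
    have hbab : b * (a * b) = a := by rw [hab.eq, ← mul_assoc, hb, one_mul]
    rintro x (rfl | rfl) y (rfl | rfl | rfl | rfl) <;>
      simp [ha, hb, haab, hbab, hab.symm.eq]
  intro g hg
  induction hg using Subgroup.closure_induction_left with
  | one => exact Or.inl rfl
  | mul_left x hx y _ hy => exact mul_mem x hx y hy
  | inv_mul_cancel x hx y _ hy =>
    have hx_inv : x⁻¹ = x := by
      rcases hx with rfl | rfl
      exacts [inv_eq_of_mul_eq_one_right ha, inv_eq_of_mul_eq_one_right hb]
    rw [hx_inv]
    exact mul_mem x hx y hy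

theorem AddCircle.coe_period_div_two_ne_zero {𝕜 : Type*} [Field 𝕜] [LinearOrder 𝕜]
    [IsStrictOrderedRing 𝕜] [Archimedean 𝕜] {p : 𝕜} [hp : Fact (0 < p)] :
    ((p / 2 : 𝕜) : AddCircle p) ≠ 0 := by
  rw [Ne, coe_eq_zero_iff_of_mem_Ico ⟨(half_pos hp.out).le, half_lt_self hp.out⟩]
  exact (half_pos hp.out).ne'

theorem add_half_ne_self (x : Circ) : x + ((1/2 : ℝ) : Circ) ≠ x :=
  fun h ↦ AddCircle.coe_period_div_two_ne_zero (add_eq_left.mp h)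

theorem neg_half : -((1/2 : ℝ) : Circ) = ((1/2 : ℝ) : Circ) :=
  neg_eq_of_add_eq_zero_left half_add_half

theorem commute_bPerm_cPerm : Commute bPerm cPerm := by
  ext ⟨x₁, x₂, x₃⟩ : 1
  simp only [Equiv.Perm.mul_apply, bPerm, cPerm, Function.Involutive.coe_toPerm, bFun, cFun,
    neg_add, neg_neg, neg_half]

theorem bPerm_apply_ne (x : T3) : bPerm x ≠ x :=
  fun h ↦ add_half_ne_self x.2.2 (congrArg (·.2.2) h)

theorem cPerm_apply_ne (x : T3) : cPerm x ≠ x :=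
  fun h ↦ add_half_ne_self x.2.1 (congrArg (·.2.1) h)

theorem bPerm_mul_cPerm_apply_ne (x : T3) : (bPerm * cPerm) x ≠ x := by
  intro h
  have h₁ : - -x.1 + ((1/2 : ℝ) : Circ) = x.1 := congrArg (·.1) h
  exact add_half_ne_self x.1 (by rwa [neg_neg] at h₁)

/-- The group generated by `b` and `c` acts freely on `T³`: no nontrivial element
of the generated group has a fixed point. -/
theorem bc_acts_freely :
    ∀ g ∈ Subgroup.closure ({bPerm, cPerm} : Set (Equiv.Perm T3)),
      g ≠ 1 → ∀ x : T3, g x ≠ x := by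
  intro g hg hg_ne x
  have hbb : bPerm * bPerm = 1 := Equiv.ext bFun_invol
  have hcc : cPerm * cPerm = 1 := Equiv.ext cFun_invol
  rcases commute_bPerm_cPerm.closure_pair_subset hbb hcc hg with rfl | rfl | rfl | rfl
  exacts [absurd rfl hg_ne, bPerm_apply_ne x, cPerm_apply_ne x, bPerm_mul_cPerm_apply_ne x]
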